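/- Let p be an odd prime, F = GF(p^n), and f = Inv ∘ (0,1). Then the number of x ∈ F with f(x+2) - 2f(x+1) + f(x) = 0 equals 3 if p = 3, equals 1 if p = 5, and equals 0 if p > 5. -/

import Mathlib

/-! Away from `x ∈ {-2, -1, 0, 1}` the transposition `(0 1)` is invisible in `f(x)`, `f(x+1)`,
`f(x+2)`, and the second difference of `x ↦ x⁻¹` is `2 / (x (x+1) (x+2)) ≠ 0`. At the four
exceptional points the second difference is `3/2`, `f(3) - 1`, `-3` and `5/2` (the last when
`3 ≠ 0`); the first three vanish exactly in characteristic `3`, where `{-2, -1, 0, 1}` collapses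
to `{0, 1, -1}`, and the last exactly in characteristic `5`. -/

open Equiv

lemma two_ne_one_of_nontrivial {R : Type*} [Ring R] [Nontrivial R] : (2 : R) ≠ 1 := by
  rw [← one_add_one_eq_two, Ne, add_eq_right]
  exact one_ne_zero

section SecondDifference

variable {F : Type*} [Field F]

/-- The paper's `∇_f(1,1)(x)`. -/
def secondDiff (f : F → F) (x : F) : F := f (x + 2) - 2 * f (x + 1) + f x

lemma secondDiff_inv {x : F} (h0 : x ≠ 0) (h1 : x + 1 ≠ 0) (h2 : x + 2 ≠ 0) :
    secondDiff (·⁻¹) x = 2 / (x * (x + 1) * (x + 2)) := by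
  rw [secondDiff]
  field_simp
  ring

variable [DecidableEq F]

/-- The paper's `Inv ∘ (0 1)`; Lean's `0⁻¹ = 0` plays the role of `Inv 0 = 0^(q-2) = 0`. -/
def invSwap (x : F) : F := (swap 0 1 x)⁻¹

lemma invSwap_of_ne {x : F} (h0 : x ≠ 0) (h1 : x ≠ 1) : invSwap x = x⁻¹ := by
  rw [invSwap, swap_apply_of_ne_of_ne h0 h1]

@[simp] lemma invSwap_zero : invSwap (0 : F) = 1 := by simp [invSwap]

@[simp] lemma invSwap_one : invSwap (1 : F) = 0 := by simp [invSwap]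

lemma invSwap_eq_one_iff {x : F} : invSwap x = 1 ↔ x = 0 := by
  rw [invSwap, inv_eq_one, swap_apply_eq_iff, swap_apply_right]

lemma secondDiff_invSwap_of_ne {x : F} (h0 : x ≠ 0) (h1 : x ≠ 1) (hm1 : x ≠ -1) (hm2 : x ≠ -2) :
    secondDiff invSwap x = 2 / (x * (x + 1) * (x + 2)) := by
  have h10 : x + 1 ≠ 0 := fun h => hm1 (by linear_combination h)
  have h11 : x + 1 ≠ 1 := fun h => h0 (by linear_combination h)
  have h20 : x + 2 ≠ 0 := fun h => hm2 (by linear_combination h)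
  have h21 : x + 2 ≠ 1 := fun h => hm1 (by linear_combination h)
  rw [← secondDiff_inv h0 h10 h20, secondDiff, secondDiff, invSwap_of_ne h20 h21,
    invSwap_of_ne h10 h11, invSwap_of_ne h0 h1]

lemma secondDiff_invSwap_zero (h2 : (2 : F) ≠ 0) : secondDiff invSwap (0 : F) = 3 / 2 := by
  rw [secondDiff, zero_add, zero_add, invSwap_of_ne h2 two_ne_one_of_nontrivial, invSwap_one,
    invSwap_zero]
  field_simp
  norm_num

lemma secondDiff_invSwap_one (h2 : (2 : F) ≠ 0) : secondDiff invSwap (1 : F) = invSwap 3 - 1 := by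
  rw [secondDiff, one_add_one_eq_two, invSwap_of_ne h2 two_ne_one_of_nontrivial, invSwap_one,
    mul_inv_cancel₀ h2]
  norm_num

lemma secondDiff_invSwap_neg_one (h2 : (2 : F) ≠ 0) : secondDiff invSwap (-1 : F) = -3 := by
  have hm1 : (-1 : F) ≠ 1 := fun h => h2 (by linear_combination -h)
  rw [secondDiff, neg_add_cancel, show (-1 : F) + 2 = 1 by ring, invSwap_one, invSwap_zero,
    invSwap_of_ne (neg_ne_zero.mpr one_ne_zero) hm1]
  norm_num

lemma secondDiff_invSwap_neg_two (h2 : (2 : F) ≠ 0) (h3 : (3 : F) ≠ 0) :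
    secondDiff invSwap (-2 : F) = 5 / 2 := by
  have hm1 : (-1 : F) ≠ 1 := fun h => h2 (by linear_combination -h)
  have hm2 : (-2 : F) ≠ 1 := fun h => h3 (by linear_combination -h)
  rw [secondDiff, neg_add_cancel, show (-2 : F) + 1 = -1 by ring, invSwap_zero,
    invSwap_of_ne (neg_ne_zero.mpr one_ne_zero) hm1, invSwap_of_ne (neg_ne_zero.mpr h2) hm2]
  field_simp
  ring

theorem secondDiff_invSwap_eq_zero_iff (h2 : (2 : F) ≠ 0) {x : F} :
    secondDiff invSwap x = 0 ↔
      (3 : F) = 0 ∧ (x = 0 ∨ x = 1 ∨ x = -1) ∨ (5 : F) = 0 ∧ x = -2 := by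
  rcases eq_or_ne x 0 with rfl | h0
  · have : (0 : F) ≠ -2 := fun h => h2 (by linear_combination h)
    simp [secondDiff_invSwap_zero h2, h2, this]
  rcases eq_or_ne x 1 with rfl | h1
  · rw [secondDiff_invSwap_one h2, sub_eq_zero, invSwap_eq_one_iff]
    grind
  rcases eq_or_ne x (-1) with rfl | hm1
  · rw [secondDiff_invSwap_neg_one h2]
    grind
  rcases eq_or_ne x (-2) with rfl | hm2
  · have h3 : (3 : F) ≠ 0 := fun h => h1 (by linear_combination -h)
    simp [secondDiff_invSwap_neg_two h2 h3, h2, h3]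
  · rw [secondDiff_invSwap_of_ne h0 h1 hm1 hm2]
    have : x + 1 ≠ 0 := fun h => hm1 (by linear_combination h)
    have : x + 2 ≠ 0 := fun h => hm2 (by linear_combination h)
    simp [*]

theorem card_filter_secondDiff_invSwap_eq_zero [Fintype F] {p : ℕ} [CharP F p] (hp : p.Prime)
    (hp2 : p ≠ 2) :
    (Finset.univ.filter fun x : F => secondDiff invSwap x = 0).card =
      if p = 3 then 3 else if p = 5 then 1 else 0 := by
  have cast_eq_zero {q : ℕ} (hq : q.Prime) : (q : F) = 0 ↔ p = q := by
    rw [CharP.cast_eq_zero_iff F p, Nat.prime_dvd_prime_iff_eq hp hq]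
  have h2 : (2 : F) ≠ 0 := by exact_mod_cast (cast_eq_zero Nat.prime_two).not.mpr hp2
  simp_rw [secondDiff_invSwap_eq_zero_iff h2]
  have h3 : (3 : F) = 0 ↔ p = 3 := by exact_mod_cast cast_eq_zero Nat.prime_three
  have h5 : (5 : F) = 0 ↔ p = 5 := by exact_mod_cast cast_eq_zero (by norm_num)
  split_ifs with hp3 hp5
  · have h5 : (5 : F) ≠ 0 := h5.not.mpr (by omega)
    refine Finset.card_eq_three.mpr ⟨0, 1, -1, zero_ne_one, ?_, ?_, ?_⟩
    · exact (neg_ne_zero.mpr one_ne_zero).symm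
    · exact fun h => h2 (by linear_combination h)
    · ext x
      simp [h3.mpr hp3, h5]
  · refine Finset.card_eq_one.mpr ⟨-2, ?_⟩
    ext x
    simp [h3.not.mpr hp3, h5.mpr hp5]
  · refine Finset.card_eq_zero.mpr (Finset.filter_eq_empty_iff.mpr fun x _ => ?_)
    simp [h3.not.mpr hp3, h5.not.mpr hp5]

end SecondDifference

lemma pow_card_sub_two_eq_inv {K : Type*} [Field K] [Fintype K] {x : K} (hx : x ≠ 0) :
    x ^ (Fintype.card K - 2) = x⁻¹ := by
  have hq : 2 ≤ Fintype.card K := Fintype.one_lt_card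
  refine eq_inv_of_mul_eq_one_left ?_
  rw [← pow_succ, show Fintype.card K - 2 + 1 = Fintype.card K - 1 by omega,
    FiniteField.pow_card_sub_one_eq_one x hx]

theorem stmt_13_general {F : Type*} [Field F] [Fintype F] [DecidableEq F] {p n : ℕ}
    (hp : Nat.Prime p) (hodd : Odd p) (hF : Fintype.card F = p ^ n)
    (f : F → F)
    (hf : f = fun x => if x = 0 then 1 else if x = 1 then 0 else x ^ (p ^ n - 2)) :
    (Finset.univ.filter fun x : F =>
      f (x + 2) - 2 * f (x + 1) + f x = 0).card =
    if p = 3 then 3 else if p = 5 then 1 else 0 := by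
  have : Fact p.Prime := ⟨hp⟩
  have : CharP F p := charP_of_card_eq_prime_pow hF
  have hf_eq : f = invSwap := by
    funext x
    rcases eq_or_ne x 0 with rfl | h0
    · simp [hf]
    rcases eq_or_ne x 1 with rfl | h1
    · simp [hf]
    rw [hf, invSwap_of_ne h0 h1, ← hF, ← pow_card_sub_two_eq_inv h0]
    simp [h0, h1]
  subst hf_eq
  exact card_filter_secondDiff_invSwap_eq_zero hp (hodd.ne_two_of_dvd_nat dvd_rfl)

theorem stmt_13 {F : Type*} [Field F] [Fintype F] [DecidableEq F] {p n : ℕ}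
    (hp : Nat.Prime p) (hodd : Odd p) (hn : 0 < n) (hF : Fintype.card F = p ^ n)
    (f : F → F)
    (hf : f = fun x => if x = 0 then 1 else if x = 1 then 0 else x ^ (p ^ n - 2)) :
    (Finset.univ.filter fun x : F =>
      f (x + 2) - 2 * f (x + 1) + f x = 0).card =
    if p = 3 then 3 else if p = 5 then 1 else 0 :=
  stmt_13_general hp hodd hF f hf
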